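/- Every digraph D contains a vertex subset X ⊆ V(D) and a vertex x₀ ∈ X such that D[X] is strongly connected, χ⃗(D[X]) ≥ χ⃗(D)/2, and for every x ∈ X there exists a directed path in D starting at x and ending at x₀ which intersects X exactly in {x, x₀}. -/

import Mathlib

/-!
Let `C` be a strong component of `D` of maximal dichromatic number, so `χ⃗(D) = χ⃗(D[C])`,
and fix `r ∈ C`. Pairing the parity of the distance to `r` with optimal colourings of the
distance levels of `C` shows that some level `L` has `χ⃗(D[C]) ≤ 2 χ⃗(D[L])`; take for `X` a
strong component of `D[L]` of maximal dichromatic number and for `x₀` the first vertex of `X`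
on a path from `r` to `X`. From `x ∈ X`, a shortest path to `r` meets `X` only in `x`, since
its other vertices are closer to `r` than the level `L`; continuing along the path from `r`
to `x₀` gives the required path.
-/

/-- A digraph on vertex type `V` is modeled as an arc relation `A : V → V → Prop`.
`Induce A X` is the arc relation of the induced subdigraph `D[X]`. -/
def Induce {V : Type*} (A : V → V → Prop) (X : Set V) : V → V → Prop :=
  fun u v => u ∈ X ∧ v ∈ X ∧ A u v

/-- `l` is (the vertex list of) a directed cycle: at least 2 vertices, consecutive
vertices joined by arcs, all vertices distinct, and an arc from the last vertex back
to the first. Its length (number of arcs) is `l.length`. -/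
def IsDicycleList {V : Type*} (A : V → V → Prop) (l : List V) : Prop :=
  2 ≤ l.length ∧ l.Chain' A ∧ l.Nodup ∧
    ∃ x y, l.getLast? = some x ∧ l.head? = some y ∧ A x y

/-- The digraph has no directed cycle. -/
def AcyclicRel {V : Type*} (A : V → V → Prop) : Prop :=
  ¬ ∃ l : List V, IsDicycleList A l

/-- The dichromatic number: the least `k` such that the vertices can be colored with
`k` colors so that each color class induces an acyclic subdigraph. -/
noncomputable def dichrom {V : Type*} (A : V → V → Prop) : ℕ :=
  sInf {k | ∃ f : V → Fin k, ∀ i, AcyclicRel (Induce A {v | f v = i})}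

/-- `l` is a directed path from `x` to `y` (possibly of length zero, i.e. `l = [x]`).
Its length (number of arcs) is `l.length - 1`. -/
def IsDipathFromTo {V : Type*} (A : V → V → Prop) (x y : V) (l : List V) : Prop :=
  l.Chain' A ∧ l.Nodup ∧ l.head? = some x ∧ l.getLast? = some y

/-- Directed distance from `x` to `y`: length of a shortest directed path. -/
noncomputable def ddist {V : Type*} (A : V → V → Prop) (x y : V) : ℕ :=
  sInf {n | ∃ l, IsDipathFromTo A x y l ∧ l.length = n + 1}

/-- The digraph is strongly connected. -/
def StronglyConnectedRel {V : Type*} (A : V → V → Prop) : Prop :=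
  ∀ x y : V, ∃ l, IsDipathFromTo A x y l

/-- The induced subdigraph `D[X]` is strongly connected. -/
def StronglyConnectedOn {V : Type*} (A : V → V → Prop) (X : Set V) : Prop :=
  ∀ x ∈ X, ∀ y ∈ X, ∃ l, IsDipathFromTo (Induce A X) x y l

/-- `X` is a strongly connected component: a maximal nonempty set inducing a strongly
connected subdigraph. -/
def IsSCC {V : Type*} (A : V → V → Prop) (X : Set V) : Prop :=
  X.Nonempty ∧ StronglyConnectedOn A X ∧
    ∀ Y : Set V, X ⊆ Y → StronglyConnectedOn A Y → Y = X

/-- The internal vertices of a path given as a vertex list. -/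
def Internal {V : Type*} (l : List V) : List V := l.dropLast.tail

/-- `D = (V, A)` contains a subdivision of `F = (W, B)` in which the subdivision path
of each arc `(u,v)` has length (number of arcs) satisfying the predicate `len u v`:
there are pairwise distinct branch vertices `b w`, and for each arc of `F` a directed
path of positive length between the corresponding branch vertices, these paths being
pairwise internally disjoint and internally avoiding all branch vertices. -/
def IsSubdivisionWith {V W : Type*} (A : V → V → Prop) (B : W → W → Prop)
    (len : W → W → ℕ → Prop) : Prop :=
  ∃ b : W → V, Function.Injective b ∧
  ∃ P : ∀ u v, B u v → List V,
    (∀ u v (h : B u v), IsDipathFromTo A (b u) (b v) (P u v h) ∧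
      2 ≤ (P u v h).length ∧ len u v ((P u v h).length - 1)) ∧
    (∀ u v (h : B u v), ∀ x ∈ Internal (P u v h),
      (∀ w : W, x ≠ b w) ∧
      ∀ u' v' (h' : B u' v'), (u, v) ≠ (u', v') → x ∉ P u' v' h')


open Relation

section InducedSubdigraph

variable {V : Type*} {A : V → V → Prop} {S T : Set V}

lemma induce_induce : Induce (Induce A S) T = Induce A (S ∩ T) := by
  funext u v
  simp only [Induce, Set.mem_inter_iff, eq_iff_iff]
  tauto

lemma induce_univ : Induce A Set.univ = A := by
  funext u v
  simp [Induce]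

lemma induce_le : Induce A S ≤ A := fun _ _ h => h.2.2

lemma induce_mono (h : S ⊆ T) : Induce A S ≤ Induce A T :=
  fun _ _ huv => ⟨h huv.1, h huv.2.1, huv.2.2⟩

lemma eq_or_mem_and_mem_of_reflTransGen_induce {a b : V}
    (h : ReflTransGen (Induce A S) a b) : a = b ∨ a ∈ S ∧ b ∈ S := by
  rcases reflTransGen_iff_eq_or_transGen.1 h with rfl | h
  · exact Or.inl rfl
  · obtain ⟨_, hac, -⟩ := TransGen.head'_iff.1 h
    obtain ⟨_, -, hcb⟩ := TransGen.tail'_iff.1 h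
    exact Or.inr ⟨hac.1, hcb.2.1⟩

end InducedSubdigraph

section Paths

variable {V : Type*} {R : V → V → Prop} {l : List V} {x y z : V}

lemma reflTransGen_of_head?_of_mem (hl : l.IsChain R) (hx : l.head? = some x) (hz : z ∈ l) :
    ReflTransGen R x z := by
  obtain ⟨t, rfl⟩ := List.head?_eq_some_iff.1 hx
  exact hl.induction (ReflTransGen R x ·) _ (fun _ _ h₁ h₂ => h₂.tail h₁)
    (fun _ => ReflTransGen.refl) z hz

lemma reflTransGen_of_mem_of_getLast? (hl : l.IsChain R) (hy : l.getLast? = some y)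
    (hz : z ∈ l) : ReflTransGen R z y := by
  obtain ⟨t, rfl⟩ := List.getLast?_eq_some_iff.1 hy
  exact hl.backwards_induction (ReflTransGen R · y) _ (fun _ _ h₁ h₂ => h₂.head h₁)
    (fun _ => by simpa using ReflTransGen.refl) z hz

lemma IsDipathFromTo.reflTransGen (h : IsDipathFromTo R x y l) : ReflTransGen R x y :=
  reflTransGen_of_head?_of_mem h.1 h.2.2.1 (List.mem_of_mem_getLast? h.2.2.2)

lemma IsDipathFromTo.exists_cons_sublist {u : V} (h : IsDipathFromTo R x y l) (hux : R u x) :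
    ∃ l', IsDipathFromTo R u y l' ∧ l'.Sublist (u :: l) := by
  obtain ⟨hch, hnd, hx, hy⟩ := h
  by_cases hu : u ∈ l
  · obtain ⟨s, t, rfl⟩ := List.mem_iff_append.1 hu
    have hsub := List.sublist_append_right s (u :: t)
    refine ⟨u :: t, ⟨hch.right_of_append, hnd.sublist hsub, rfl, ?_⟩, hsub.cons u⟩
    rwa [List.getLast?_append_of_ne_nil _ (List.cons_ne_nil u t)] at hy
  · obtain ⟨t, rfl⟩ := List.head?_eq_some_iff.1 hx
    exact ⟨u :: x :: t, ⟨hch.cons_cons hux, List.nodup_cons.2 ⟨hu, hnd⟩, rfl,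
      by rwa [List.getLast?_cons_cons]⟩, List.Sublist.refl _⟩

lemma exists_dipath_of_reflTransGen (h : ReflTransGen R x y) : ∃ l, IsDipathFromTo R x y l := by
  induction h using ReflTransGen.head_induction_on with
  | refl => exact ⟨[y], List.isChain_singleton y, List.nodup_singleton y, rfl, rfl⟩
  | head hxz _ ih =>
    obtain ⟨l, hl⟩ := ih
    obtain ⟨l', hl', -⟩ := hl.exists_cons_sublist hxz
    exact ⟨l', hl'⟩

lemma exists_dipath_of_reflTransGen_induce {A : V → V → Prop} {S : Set V}
    (h : ReflTransGen (Induce A S) x y) (hx : x ∈ S) :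
    ∃ l, IsDipathFromTo A x y l ∧ ∀ z ∈ l, z ∈ S := by
  obtain ⟨l, hl⟩ := exists_dipath_of_reflTransGen h
  refine ⟨l, ⟨hl.1.imp induce_le, hl.2⟩, fun z hz => ?_⟩
  rcases eq_or_mem_and_mem_of_reflTransGen_induce (reflTransGen_of_head?_of_mem hl.1 hl.2.2.1 hz)
    with rfl | ⟨-, hz⟩
  exacts [hx, hz]

lemma exists_first_mem_of_reflTransGen {X : Set V} (h : ReflTransGen R x y) (hy : y ∈ X) :
    ∃ c ∈ X, ReflTransGen (Induce R (Xᶜ ∪ {c})) x c := by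
  induction h using ReflTransGen.head_induction_on with
  | refl => exact ⟨y, hy, .refl⟩
  | @head a b hab _ ih =>
    obtain ⟨c, hc, hbc⟩ := ih
    by_cases ha : a ∈ X
    · exact ⟨a, ha, .refl⟩
    refine ⟨c, hc, .head ⟨Or.inl ha, ?_, hab⟩ hbc⟩
    rcases eq_or_mem_and_mem_of_reflTransGen_induce hbc with rfl | ⟨hb, -⟩
    exacts [Or.inr rfl, hb]

end Paths

section Cycles

variable {V : Type*} {R : V → V → Prop} {l : List V}

lemma IsDicycleList.reflTransGen (h : IsDicycleList R l) {u v : V} (hu : u ∈ l) (hv : v ∈ l) :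
    ReflTransGen R u v := by
  obtain ⟨-, hch, -, x, y, hx, hy, hxy⟩ := h
  exact (reflTransGen_of_mem_of_getLast? hch hx hu).tail hxy |>.trans
    (reflTransGen_of_head?_of_mem hch hy hv)

lemma IsDicycleList.apply_eq_of_monotone (h : IsDicycleList R l) {m : V → ℕ}
    (hm : ∀ u v, R u v → m u ≤ m v) {u v : V} (hu : u ∈ l) (hv : v ∈ l) : m u = m v := by
  have hle : ∀ {a b}, ReflTransGen R a b → m a ≤ m b := by
    intro a b hab
    induction hab with
    | refl => exact le_rfl
    | tail _ hbc ih => exact ih.trans (hm _ _ hbc)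
  exact le_antisymm (hle (h.reflTransGen hu hv)) (hle (h.reflTransGen hv hu))

lemma isDicycleList_induce_iff {S : Set V} :
    IsDicycleList (Induce R S) l ↔ IsDicycleList R l ∧ ∀ z ∈ l, z ∈ S := by
  constructor
  · intro h
    have ⟨hlen, hch, hnd, x, y, hx, hy, hxy⟩ := h
    refine ⟨⟨hlen, hch.imp induce_le, hnd, x, y, hx, hy, hxy.2.2⟩, fun z hz => ?_⟩
    have hyz := h.reflTransGen (List.mem_of_mem_head? hy) hz
    rcases eq_or_mem_and_mem_of_reflTransGen_induce hyz with rfl | ⟨-, hz⟩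
    exacts [hxy.2.1, hz]
  · rintro ⟨⟨hlen, hch, hnd, x, y, hx, hy, hxy⟩, hS⟩
    refine ⟨hlen, hch.imp_of_mem_imp fun a b ha hb hab => ⟨hS a ha, hS b hb, hab⟩, hnd,
      x, y, hx, hy, hS x (List.mem_of_mem_getLast? hx), hS y (List.mem_of_mem_head? hy), hxy⟩

lemma acyclicRel_induce_of_subsingleton {S : Set V} (hS : S.Subsingleton) :
    AcyclicRel (Induce R S) := by
  rintro ⟨l, hl⟩
  obtain ⟨⟨hlen, -, hnd, -⟩, hmem⟩ := isDicycleList_induce_iff.1 hl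
  match l, hlen with
  | a :: b :: _, _ =>
    exact (List.nodup_cons.1 hnd).1 (hS (hmem a (by simp)) (hmem b (by simp)) ▸ by simp)

end Cycles

section Dichromatic

variable {V : Type*} {A : V → V → Prop}

lemma dichrom_le_card {ι : Type*} [Fintype ι] (f : V → ι)
    (hf : ∀ i, AcyclicRel (Induce A {v | f v = i})) : dichrom A ≤ Fintype.card ι := by
  classical
  let e := Fintype.equivFin ι
  refine Nat.sInf_le ⟨e ∘ f, fun i => ?_⟩
  simpa only [Function.comp_apply, ← e.eq_symm_apply] using hf (e.symm i)

lemma exists_coloring_of_dichrom_le [Fintype V] {k : ℕ} (h : dichrom A ≤ k) :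
    ∃ f : V → Fin k, ∀ i, AcyclicRel (Induce A {v | f v = i}) := by
  have hne : {k | ∃ f : V → Fin k, ∀ i, AcyclicRel (Induce A {v | f v = i})}.Nonempty :=
    ⟨_, Fintype.equivFin V, fun i => acyclicRel_induce_of_subsingleton
      fun u hu v hv => (Fintype.equivFin V).injective (hu.trans hv.symm)⟩
  obtain ⟨f, hf⟩ := Nat.sInf_mem hne
  refine ⟨fun v => Fin.castLE h (f v), fun i => ?_⟩
  rintro ⟨l, hl⟩
  obtain ⟨hl, hmem⟩ := isDicycleList_induce_iff.1 hl
  obtain ⟨y, hy⟩ : ∃ y, y ∈ l := List.exists_mem_of_length_pos (by linarith [hl.1])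
  refine hf (f y) ⟨l, isDicycleList_induce_iff.2 ⟨hl, fun z hz => ?_⟩⟩
  exact Fin.castLE_injective h ((hmem z hz).trans (hmem y hy).symm)

lemma dichrom_pos [Fintype V] [Nonempty V] : 0 < dichrom A := by
  obtain ⟨f, -⟩ := exists_coloring_of_dichrom_le (A := A) le_rfl
  exact Fin.pos (f (Classical.arbitrary V))

end Dichromatic

section Fibers

variable {V : Type*} [Fintype V] {A : V → V → Prop} {κ β : Type*}

/-- Colour each fibre of `p` optimally and pair that colour with `g`: a monochromatic cycle then
has constant `g`, so it lies in one fibre, where it is monochromatic for an acyclic colouring. -/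
theorem dichrom_le_card_mul_of_fibers [Fintype κ] (g : V → κ) (p : V → β) {k : ℕ}
    (hcyc : ∀ c l, IsDicycleList (Induce A {v | g v = c}) l →
      ∀ u ∈ l, ∀ v ∈ l, p u = p v)
    (hk : ∀ v, dichrom (Induce A {u | p u = p v}) ≤ k) :
    dichrom A ≤ Fintype.card κ * k := by
  have hcol : ∀ b, ∃ f : V → Fin k,
      ∀ i, AcyclicRel (Induce (Induce A {u | p u = b}) {v | f v = i}) := by
    intro b
    by_cases hb : ∃ v, p v = b
    · obtain ⟨v, rfl⟩ := hb
      exact exists_coloring_of_dichrom_le (hk v)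
    · push Not at hb
      refine ⟨fun v => (exists_coloring_of_dichrom_le (hk v)).choose v, fun i => ?_⟩
      rw [induce_induce]
      exact acyclicRel_induce_of_subsingleton fun u hu => absurd hu.1 (hb u)
  choose f hf using hcol
  rw [← Fintype.card_fin k, ← Fintype.card_prod]
  refine dichrom_le_card (fun v => (g v, f (p v) v)) fun ⟨c, i⟩ => ?_
  rintro ⟨l, hl⟩
  obtain ⟨hl, hmem⟩ := isDicycleList_induce_iff.1 hl
  simp only [Set.mem_ofPred_eq, Prod.mk.injEq] at hmem
  obtain ⟨y, hy⟩ : ∃ y, y ∈ l := List.exists_mem_of_length_pos (by linarith [hl.1])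
  have hp := hcyc c l (isDicycleList_induce_iff.2 ⟨hl, fun z hz => (hmem z hz).1⟩)
  refine hf (p y) i ⟨l, isDicycleList_induce_iff.2
    ⟨isDicycleList_induce_iff.2 ⟨hl, fun z hz => hp z hz y hy⟩, fun z hz => ?_⟩⟩
  simpa only [Set.mem_ofPred_eq, hp z hz y hy] using (hmem z hz).2

theorem exists_dichrom_le_card_mul_fiber [Fintype κ] {S : Set V} (hS : S.Nonempty)
    (g : V → κ) (p : V → β)
    (hcyc : ∀ c l, IsDicycleList (Induce (Induce A S) {v | g v = c}) l →
      ∀ u ∈ l, ∀ v ∈ l, p u = p v) :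
    ∃ v₀ ∈ S, dichrom (Induce A S) ≤
      Fintype.card κ * dichrom (Induce A (S ∩ {u | p u = p v₀})) := by
  classical
  have : Nonempty V := hS.to_subtype.map Subtype.val
  obtain ⟨v₀, hv₀, hmax⟩ := Finset.exists_max_image S.toFinset
    (fun v => dichrom (Induce A (S ∩ {u | p u = p v}))) (Set.toFinset_nonempty.2 hS)
  refine ⟨v₀, Set.mem_toFinset.1 hv₀, dichrom_le_card_mul_of_fibers g p hcyc fun v => ?_⟩
  rw [induce_induce]
  by_cases hv : ∃ w ∈ S, p w = p v
  · obtain ⟨w, hw, hwv⟩ := hv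
    simpa only [hwv] using hmax w (Set.mem_toFinset.2 hw)
  · push Not at hv
    calc dichrom (Induce A (S ∩ {u | p u = p v}))
        ≤ Fintype.card Unit := dichrom_le_card (fun _ => ()) fun _ => by
          rw [induce_induce]
          exact acyclicRel_induce_of_subsingleton fun u hu => absurd hu.1.2 (hv u hu.1.1)
      _ ≤ _ := dichrom_pos

end Fibers

section StrongComponents

variable {V : Type*} {R : V → V → Prop} {u v : V}

def scc (R : V → V → Prop) (v : V) : Set V :=
  {u | ReflTransGen R v u ∧ ReflTransGen R u v}

lemma mem_scc_self : v ∈ scc R v := ⟨.refl, .refl⟩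

lemma scc_eq_scc (h : u ∈ scc R v) : scc R u = scc R v := by
  ext z
  exact ⟨fun hz => ⟨h.1.trans hz.1, hz.2.trans h.2⟩,
    fun hz => ⟨h.2.trans hz.1, hz.2.trans h.1⟩⟩

lemma scc_eq_scc_iff : scc R u = scc R v ↔ u ∈ scc R v :=
  ⟨fun h => h ▸ mem_scc_self, scc_eq_scc⟩

lemma scc_induce_subset {A : V → V → Prop} {U : Set V} (hv : v ∈ U) :
    scc (Induce A U) v ⊆ U :=
  fun _ hu => (eq_or_mem_and_mem_of_reflTransGen_induce hu.1).elim (· ▸ hv) And.right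

lemma reflTransGen_induce_scc {x y : V} (hxy : ReflTransGen R x y) (hx : x ∈ scc R v)
    (hy : y ∈ scc R v) : ReflTransGen (Induce R (scc R v)) x y := by
  induction hxy using ReflTransGen.head_induction_on with
  | refl => exact .refl
  | @head a c hac hcy ih =>
    have hc : c ∈ scc R v := ⟨hx.1.tail hac, hcy.trans hy.2⟩
    exact .head ⟨hx, hc, hac⟩ (ih hc)

lemma stronglyConnectedOn_scc : StronglyConnectedOn R (scc R v) := fun _ hx _ hy =>
  exists_dipath_of_reflTransGen (reflTransGen_induce_scc (hx.2.trans hy.1) hx hy)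

lemma StronglyConnectedOn.reflTransGen {A : V → V → Prop} {C : Set V}
    (hC : StronglyConnectedOn A C) (hu : u ∈ C) (hv : v ∈ C) : ReflTransGen (Induce A C) u v :=
  (hC u hu v hv).choose_spec.reflTransGen

lemma stronglyConnectedOn_induce_iff {A : V → V → Prop} {U X : Set V} (h : X ⊆ U) :
    StronglyConnectedOn (Induce A U) X ↔ StronglyConnectedOn A X := by
  rw [StronglyConnectedOn, StronglyConnectedOn, induce_induce, Set.inter_eq_right.2 h]

theorem exists_stronglyConnectedOn_dichrom_ge [Fintype V] {A : V → V → Prop} {U : Set V}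
    (hU : U.Nonempty) :
    ∃ X ⊆ U, X.Nonempty ∧ StronglyConnectedOn A X ∧
      dichrom (Induce A U) ≤ dichrom (Induce A X) := by
  obtain ⟨v, hv, hle⟩ := exists_dichrom_le_card_mul_fiber hU (fun _ => ()) (scc (Induce A U))
    fun _ l hl _ hu _ hw => by
      have hl := (isDicycleList_induce_iff.1 hl).1
      exact scc_eq_scc ⟨hl.reflTransGen hw hu, hl.reflTransGen hu hw⟩
  have hX : U ∩ {u | scc (Induce A U) u = scc (Induce A U) v} = scc (Induce A U) v := by
    simp only [scc_eq_scc_iff, Set.ofPred_mem_eq, Set.inter_eq_right.2 (scc_induce_subset hv)]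
  rw [hX, Fintype.card_unit, one_mul] at hle
  exact ⟨_, scc_induce_subset hv, ⟨v, mem_scc_self⟩,
    (stronglyConnectedOn_induce_iff (scc_induce_subset hv)).1 stronglyConnectedOn_scc, hle⟩

end StrongComponents

section Distance

variable {V : Type*} {R : V → V → Prop} {l : List V} {x y : V}

lemma ddist_add_one_le (h : IsDipathFromTo R x y l) : ddist R x y + 1 ≤ l.length := by
  obtain ⟨t, rfl⟩ := List.head?_eq_some_iff.1 h.2.2.1
  exact Nat.succ_le_succ (Nat.sInf_le ⟨x :: t, h, rfl⟩)

lemma exists_dipath_length_eq_ddist (h : ReflTransGen R x y) :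
    ∃ l, IsDipathFromTo R x y l ∧ l.length = ddist R x y + 1 := by
  obtain ⟨l, hl⟩ := exists_dipath_of_reflTransGen h
  obtain ⟨t, rfl⟩ := List.head?_eq_some_iff.1 hl.2.2.1
  exact Nat.sInf_mem (s := {n | ∃ l, IsDipathFromTo R x y l ∧ l.length = n + 1})
    ⟨t.length, x :: t, hl, rfl⟩

lemma ddist_le_ddist_add_one {u : V} (h : ReflTransGen R x y) (hux : R u x) :
    ddist R u y ≤ ddist R x y + 1 := by
  obtain ⟨l, hl, hlen⟩ := exists_dipath_length_eq_ddist h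
  obtain ⟨l', hl', hsub⟩ := hl.exists_cons_sublist hux
  have hle := ddist_add_one_le hl'
  have hlen' := hsub.length_le
  simp only [List.length_cons] at hlen'
  omega

lemma exists_rel_ddist_lt (h : ReflTransGen R x y) (hxy : x ≠ y) :
    ∃ z, R x z ∧ ReflTransGen R z y ∧ ddist R z y < ddist R x y := by
  obtain ⟨l, ⟨hch, hnd, hx, hy⟩, hlen⟩ := exists_dipath_length_eq_ddist h
  obtain ⟨_ | ⟨z, t⟩, rfl⟩ := List.head?_eq_some_iff.1 hx
  · exact absurd (by simpa using hy) hxy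
  have hz : IsDipathFromTo R z y (z :: t) :=
    ⟨hch.tail, hnd.sublist (List.sublist_cons_self x _), rfl,
      by rwa [List.getLast?_cons_cons] at hy⟩
  refine ⟨z, (List.isChain_cons_cons.1 hch).1, hz.reflTransGen, ?_⟩
  have := ddist_add_one_le hz
  simp only [List.length_cons] at this hlen
  omega

lemma reflTransGen_induce_ddist_lt (h : ReflTransGen R x y) :
    ReflTransGen (Induce R ({x} ∪ {z | ddist R z y < ddist R x y})) x y := by
  induction hn : ddist R x y using Nat.strong_induction_on generalizing x with
  | _ n ih =>
  by_cases hxy : x = y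
  · exact hxy ▸ .refl
  obtain ⟨z, hxz, hzy, hlt⟩ := exists_rel_ddist_lt h hxy
  refine .head ⟨Or.inl rfl, Or.inr (hn ▸ hlt), hxz⟩
    (ReflTransGen.mono (induce_mono ?_) _ _ (ih _ (hn ▸ hlt) hzy rfl))
  rintro w (rfl | hw)
  exacts [Or.inr (hn ▸ hlt), Or.inr (lt_trans hw (hn ▸ hlt))]

end Distance

section Levels

variable {V : Type*} [Fintype V] {A : V → V → Prop} {C : Set V} {r : V}

/-- An arc of `D[C]` lowers the distance to `r` by at most one, so the distance never decreases
along a cycle whose vertices share a parity, and such a cycle stays in one level. -/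
theorem exists_dichrom_le_two_mul_level (hC : StronglyConnectedOn A C) (hr : r ∈ C) :
    ∃ v ∈ C, dichrom (Induce A C) ≤
      2 * dichrom (Induce A (C ∩ {u | ddist (Induce A C) u r = ddist (Induce A C) v r})) := by
  set d := fun u => ddist (Induce A C) u r
  have hmono : ∀ c a b, Induce (Induce A C) {u | (d u : ZMod 2) = c} a b → d a ≤ d b := by
    rintro c a b ⟨ha, hb, hab⟩
    have hstep : d a ≤ d b + 1 := ddist_le_ddist_add_one (hC.reflTransGen hab.2.1 hr) hab
    have hpar : d a % 2 = d b % 2 := (ZMod.natCast_eq_natCast_iff' _ _ 2).1 (ha.trans hb.symm)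
    omega
  obtain ⟨v, hv, hle⟩ :=
    exists_dichrom_le_card_mul_fiber ⟨r, hr⟩ (fun u => (d u : ZMod 2)) d
      fun c _ hl _ hu _ hw => hl.apply_eq_of_monotone (hmono c) hu hw
  exact ⟨v, hv, by rwa [ZMod.card] at hle⟩

end Levels

/-- Every digraph contains a strongly connected induced subdigraph of at least half its
dichromatic number, with a vertex `x₀` reachable from every vertex of it by a path
meeting the set exactly in its endpoints. -/
theorem stmt_3 {V : Type*} [Fintype V] [Nonempty V] (A : V → V → Prop) :
    ∃ (X : Set V) (x₀ : V), x₀ ∈ X ∧ StronglyConnectedOn A X ∧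
      dichrom A ≤ 2 * dichrom (Induce A X) ∧
      ∀ x ∈ X, ∃ l, IsDipathFromTo A x x₀ l ∧ ∀ z ∈ l, z ∈ X → z = x ∨ z = x₀ := by
  obtain ⟨C, -, ⟨r, hr⟩, hC, hAC⟩ :=
    exists_stronglyConnectedOn_dichrom_ge (A := A) Set.univ_nonempty
  rw [induce_univ] at hAC
  obtain ⟨v, hv, hCL⟩ := exists_dichrom_le_two_mul_level hC hr
  obtain ⟨X, hXL, ⟨x₁, hx₁⟩, hX, hLX⟩ := exists_stronglyConnectedOn_dichrom_ge (A := A)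
    (U := C ∩ {u | ddist (Induce A C) u r = ddist (Induce A C) v r}) ⟨v, hv, rfl⟩
  obtain ⟨x₀, hx₀, hrx₀⟩ := exists_first_mem_of_reflTransGen
    (ReflTransGen.mono induce_le _ _ (hC.reflTransGen hr (hXL hx₁).1)) hx₁
  refine ⟨X, x₀, hx₀, hX, by omega, fun x hx =>
    exists_dipath_of_reflTransGen_induce ?_ fun _ => Or.inl rfl⟩
  have hxr := reflTransGen_induce_ddist_lt (hC.reflTransGen (hXL hx).1 hr)
  rw [induce_induce] at hxr
  refine (ReflTransGen.mono (induce_mono ?_) _ _ hxr).trans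
    (ReflTransGen.mono (induce_mono ?_) _ _ hrx₀)
  · rintro z ⟨-, rfl | hz⟩ hzX
    · exact Or.inl rfl
    · exact absurd ((hXL hzX).2.trans (hXL hx).2.symm) hz.ne
  · rintro z (hz | rfl) hzX
    exacts [absurd hzX hz, Or.inr rfl]
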